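/- There exist two-dimensional Hilbert spaces H₁, H₂, density operators ρ₁ on H₁ and ρ₂ on H₂, a separable quantum predicate A on H₁ ⊗ H₂ (i.e., 0 ≤ A ≤ I and A is a positive combination of product operators), an entangled density operator ρ on H₁ ⊗ H₂, and λ > 0 such that ρ is a coupling for (ρ₁, ρ₂) with tr(Aρ) ≥ λ, but no separable state σ that couples (ρ₁, ρ₂) satisfies tr(Aσ) ≥ λ. -/

import Mathlib

open Matrix
open scoped ComplexOrder Kronecker

noncomputable section

def ptr2 {n m : Type*} [Fintype m] (ρ : Matrix (n × m) (n × m) ℂ) : Matrix n n ℂ :=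
  Matrix.of fun i j => ∑ k, ρ (i, k) (j, k)

def ptr1 {n m : Type*} [Fintype n] (ρ : Matrix (n × m) (n × m) ℂ) : Matrix m m ℂ :=
  Matrix.of fun i j => ∑ k, ρ (k, i) (k, j)

/-- A bipartite operator is separable if it is a finite sum of tensor products of
positive semidefinite operators. -/
def Separable {n m : Type*} [Fintype n] [Fintype m]
    (ρ : Matrix (n × m) (n × m) ℂ) : Prop :=
  ∃ (k : ℕ) (a : Fin k → Matrix n n ℂ) (b : Fin k → Matrix m m ℂ),
    (∀ i, (a i).PosSemidef) ∧ (∀ i, (b i).PosSemidef) ∧ ρ = ∑ i, a i ⊗ₖ b i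

/-! ### Auxiliary lemmas -/

lemma outer_psd' {n : Type*} [Fintype n] (v : n → ℂ) :
    (Matrix.vecMulVec v (star v)).PosSemidef := by
  refine Matrix.PosSemidef.of_dotProduct_mulVec_nonneg ?_ ?_
  · ext i j
    simp [Matrix.conjTranspose_apply, Matrix.vecMulVec_apply, mul_comm]
  · intro x
    have h : star x ⬝ᵥ (Matrix.vecMulVec v (star v) *ᵥ x)
        = star (star v ⬝ᵥ x) * (star v ⬝ᵥ x) := by
      simp only [dotProduct, Matrix.mulVec, Matrix.vecMulVec_apply, Pi.star_apply,
        star_sum, star_mul', star_star, Finset.sum_mul, Finset.mul_sum]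
      rw [Finset.sum_comm]
      refine Finset.sum_congr rfl fun i _ => Finset.sum_congr rfl fun j _ => by ring
    rw [h]
    exact star_mul_self_nonneg _

lemma smul_psd' {n : Type*} [Fintype n] {M : Matrix n n ℂ} {c : ℝ} (hc : 0 ≤ c)
    (h : M.PosSemidef) : ((c : ℂ) • M).PosSemidef := by
  refine Matrix.PosSemidef.of_dotProduct_mulVec_nonneg ?_ ?_
  · have h1 := h.1
    unfold Matrix.IsHermitian at *
    rw [conjTranspose_smul, h1]
    congr 1
    simp
  · intro x
    rw [smul_mulVec, dotProduct_smul]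
    have h0 : (0:ℂ) ≤ (c:ℂ) := Complex.zero_le_real.mpr hc
    calc (0:ℂ) = (c:ℂ) * 0 := by ring
    _ ≤ (c:ℂ) * (star x ⬝ᵥ M *ᵥ x) := mul_le_mul_of_nonneg_left (h.dotProduct_mulVec_nonneg x) h0

lemma psd2_diag_re {a : Matrix (Fin 2) (Fin 2) ℂ} (ha : a.PosSemidef) (i : Fin 2) :
    (a i i).im = 0 ∧ 0 ≤ (a i i).re := by
  have h1 : (0:ℂ) ≤ a i i := by
    have := ha.dotProduct_mulVec_nonneg (Pi.single i 1)
    simpa [dotProduct, mulVec, Pi.single_apply, Fin.sum_univ_two] using this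
  rw [Complex.le_def] at h1
  exact ⟨by simpa using h1.2.symm, by simpa using h1.1⟩

lemma psd2_offdiag {a : Matrix (Fin 2) (Fin 2) ℂ} (ha : a.PosSemidef) :
    a 1 0 = star (a 0 1) := (ha.1.apply 1 0).symm

lemma psd2_sq_le {a : Matrix (Fin 2) (Fin 2) ℂ} (ha : a.PosSemidef) :
    ((a 0 1).re) ^ 2 ≤ (a 0 0).re * (a 1 1).re := by
  have key : ∀ t : ℝ, 0 ≤ (a 0 0).re * (t * t) + (2 * (a 0 1).re) * t + (a 1 1).re := by
    intro t
    have h := ha.dotProduct_mulVec_nonneg ![(t:ℂ), 1]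
    rw [Complex.le_def] at h
    have h1 := h.1
    have h10 := psd2_offdiag ha
    simp only [dotProduct, mulVec, Fin.sum_univ_two, Matrix.cons_val_zero, Matrix.cons_val_one,
      Matrix.head_cons, Pi.star_apply, star_one, h10, Complex.star_def, Complex.conj_ofReal] at h1
    simp only [Complex.add_re, Complex.mul_re, Complex.zero_re, Complex.ofReal_re,
      Complex.ofReal_im, Complex.one_re, Complex.one_im, Complex.conj_re, Complex.conj_im] at h1 ⊢
    nlinarith [h1]
  have := discrim_le_zero key
  rw [discrim] at this
  nlinarith [this]

def outer {n : Type*} (v : n → ℂ) : Matrix n n ℂ := Matrix.vecMulVec v (star v)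

def e0 : Fin 2 → ℂ := ![1, 0]
def e1 : Fin 2 → ℂ := ![0, 1]
def vp : Fin 2 → ℂ := ![1, 1]
def vm : Fin 2 → ℂ := ![1, -1]

def Amat : Matrix (Fin 2 × Fin 2) (Fin 2 × Fin 2) ℂ :=
  ((1/2 : ℝ) : ℂ) • (outer e0 ⊗ₖ outer e0) + ((1/2 : ℝ) : ℂ) • (outer e1 ⊗ₖ outer e1)
  + ((1/8 : ℝ) : ℂ) • (outer vp ⊗ₖ outer vp) + ((1/8 : ℝ) : ℂ) • (outer vm ⊗ₖ outer vm)

def uB : Fin 2 × Fin 2 → ℂ := fun p => if p.1 = p.2 then 1 else 0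

def rhoB : Matrix (Fin 2 × Fin 2) (Fin 2 × Fin 2) ℂ := ((1/2 : ℝ) : ℂ) • outer uB

lemma real_key {ra sa rb sb ca cb : ℝ} (h1 : 0 ≤ ra) (h2 : 0 ≤ sa) (h3 : 0 ≤ rb)
    (h4 : 0 ≤ sb) (ha : ca^2 ≤ ra*sa) (hb : cb^2 ≤ rb*sb) :
    2*(ca*cb) ≤ ra*sb + sa*rb := by
  rcases le_or_gt (ca*cb) 0 with h | h
  · nlinarith [mul_nonneg h1 h4, mul_nonneg h2 h3]
  · have hpos : 0 < ra*sb + sa*rb + 2*(ca*cb) := by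
      have := mul_nonneg h1 h4
      have := mul_nonneg h2 h3
      linarith
    nlinarith [hpos, sq_nonneg (ra*sb - sa*rb),
      mul_le_mul ha hb (sq_nonneg cb) (mul_nonneg h1 h2)]

lemma key_term (a b : Matrix (Fin 2) (Fin 2) ℂ) (ha : a.PosSemidef) (hb : b.PosSemidef) :
    ((Amat * (a ⊗ₖ b)).trace).re ≤ 3/4 * ((a.trace * b.trace).re) := by
  have ia0 := (psd2_diag_re ha 0).1
  have ia1 := (psd2_diag_re ha 1).1
  have ib0 := (psd2_diag_re hb 0).1
  have ib1 := (psd2_diag_re hb 1).1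
  simp only [Amat, Matrix.trace, Matrix.diag_apply, Matrix.mul_apply, Fintype.sum_prod_type,
    Fin.sum_univ_two, Matrix.add_apply, Matrix.smul_apply, Matrix.kroneckerMap_apply,
    outer, Matrix.vecMulVec_apply, Pi.star_apply, e0, e1, vp, vm,
    Matrix.cons_val_zero, Matrix.cons_val_one, Matrix.head_cons, star_one, star_zero,
    star_neg, smul_eq_mul, psd2_offdiag ha, psd2_offdiag hb, Complex.star_def]
  norm_num [ia0, ia1, ib0, ib1]
  nlinarith [real_key (psd2_diag_re ha 0).2 (psd2_diag_re ha 1).2 (psd2_diag_re hb 0).2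
    (psd2_diag_re hb 1).2 (psd2_sq_le ha) (psd2_sq_le hb)]

lemma sep_le (σ : Matrix (Fin 2 × Fin 2) (Fin 2 × Fin 2) ℂ)
    (hs : Separable σ) (ht : σ.trace = 1) : ((Amat * σ).trace).re ≤ 3/4 := by
  obtain ⟨k, a, b, ha, hb, rfl⟩ := hs
  rw [Finset.mul_sum, trace_sum, Complex.re_sum]
  have htr : (∑ i, (a i).trace * (b i).trace) = 1 := by
    rw [trace_sum] at ht
    simpa [Matrix.trace_kronecker] using ht
  have htr' : (∑ i : Fin k, ((a i).trace * (b i).trace).re) = 1 := by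
    rw [← Complex.re_sum, htr]
    simp
  calc (∑ i : Fin k, ((Amat * (a i ⊗ₖ b i)).trace).re)
      ≤ ∑ i : Fin k, 3/4 * (((a i).trace * (b i).trace).re) :=
        Finset.sum_le_sum fun i _ => key_term _ _ (ha i) (hb i)
    _ = 3/4 * ∑ i : Fin k, (((a i).trace * (b i).trace).re) := by rw [Finset.mul_sum]
    _ = 3/4 := by rw [htr']; norm_num

lemma kron_outer (v w : Fin 2 → ℂ) :
    outer v ⊗ₖ outer w = outer (fun p : Fin 2 × Fin 2 => v p.1 * w p.2) := by
  ext ⟨i, j⟩ ⟨k, l⟩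
  simp only [outer, Matrix.kroneckerMap_apply, Matrix.vecMulVec_apply, Pi.star_apply, star_mul']
  ring

lemma rhoB_trace : rhoB.trace = 1 := by
  norm_num [rhoB, outer, Matrix.trace, Fintype.sum_prod_type, Fin.sum_univ_two,
    Matrix.vecMulVec_apply, uB]

lemma outer_psd {n : Type*} [Fintype n] (v : n → ℂ) : (outer v).PosSemidef := outer_psd' v

lemma Bmat_eq : (1 : Matrix (Fin 2 × Fin 2) (Fin 2 × Fin 2) ℂ) - Amat =
    ((1/2 : ℝ) : ℂ) • (outer e0 ⊗ₖ outer e1) + ((1/2 : ℝ) : ℂ) • (outer e1 ⊗ₖ outer e0)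
    + ((1/8 : ℝ) : ℂ) • (outer vp ⊗ₖ outer vm) + ((1/8 : ℝ) : ℂ) • (outer vm ⊗ₖ outer vp) := by
  ext ⟨i, j⟩ ⟨k, l⟩
  fin_cases i <;> fin_cases j <;> fin_cases k <;> fin_cases l <;>
    norm_num [Amat, outer, Matrix.one_apply, Matrix.kroneckerMap_apply,
      Matrix.vecMulVec_apply, e0, e1, vp, vm, Prod.ext_iff, -Matrix.cons_vecMulVec, -Matrix.vecMulVec_cons]

lemma Amat_rho_trace : ((Amat * rhoB).trace).re = 1 := by
  simp [Amat, rhoB, outer, Matrix.trace, Matrix.mul_apply, Fintype.sum_prod_type,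
    Fin.sum_univ_two, Matrix.add_apply, Matrix.smul_apply, Matrix.kroneckerMap_apply,
    Matrix.vecMulVec_apply, uB, e0, e1, vp, vm, -Matrix.cons_vecMulVec, -Matrix.vecMulVec_cons]
  norm_num

/-! ### Main theorem -/

theorem entangled_witness_exists :
    ∃ (ρ₁ ρ₂ : Matrix (Fin 2) (Fin 2) ℂ)
      (A ρ : Matrix (Fin 2 × Fin 2) (Fin 2 × Fin 2) ℂ) (lam : ℝ),
      ρ₁.PosSemidef ∧ ρ₁.trace = 1 ∧ ρ₂.PosSemidef ∧ ρ₂.trace = 1 ∧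
      A.PosSemidef ∧ (1 - A).PosSemidef ∧ Separable A ∧
      ρ.PosSemidef ∧ ρ.trace = 1 ∧ ¬ Separable ρ ∧
      0 < lam ∧
      ptr2 ρ = ρ₁ ∧ ptr1 ρ = ρ₂ ∧ lam ≤ ((A * ρ).trace).re ∧
      ∀ σ : Matrix (Fin 2 × Fin 2) (Fin 2 × Fin 2) ℂ,
        Separable σ → σ.PosSemidef → ptr2 σ = ρ₁ → ptr1 σ = ρ₂ →
          ¬ lam ≤ ((A * σ).trace).re := by
  refine ⟨((1/2 : ℝ) : ℂ) • 1, ((1/2 : ℝ) : ℂ) • 1, Amat, rhoB, 1, ?_, ?_, ?_, ?_, ?_, ?_, ?_,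
    ?_, ?_, ?_, ?_, ?_, ?_, ?_, ?_⟩
  · exact smul_psd' (by norm_num) Matrix.PosSemidef.one
  · norm_num [Matrix.trace_smul, Matrix.trace_one]
  · exact smul_psd' (by norm_num) Matrix.PosSemidef.one
  · norm_num [Matrix.trace_smul, Matrix.trace_one]
  · -- A PSD
    unfold Amat
    rw [kron_outer, kron_outer, kron_outer, kron_outer]
    exact (((smul_psd' (by norm_num) (outer_psd _)).add
      (smul_psd' (by norm_num) (outer_psd _))).add
      (smul_psd' (by norm_num) (outer_psd _))).add (smul_psd' (by norm_num) (outer_psd _))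
  · -- 1 - A PSD
    rw [Bmat_eq, kron_outer, kron_outer, kron_outer, kron_outer]
    exact (((smul_psd' (by norm_num) (outer_psd _)).add
      (smul_psd' (by norm_num) (outer_psd _))).add
      (smul_psd' (by norm_num) (outer_psd _))).add (smul_psd' (by norm_num) (outer_psd _))
  · -- Separable A
    refine ⟨4, ![((1/2 : ℝ) : ℂ) • outer e0, ((1/2 : ℝ) : ℂ) • outer e1,
      ((1/8 : ℝ) : ℂ) • outer vp, ((1/8 : ℝ) : ℂ) • outer vm],
      ![outer e0, outer e1, outer vp, outer vm], ?_, ?_, ?_⟩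
    · intro i
      fin_cases i <;> exact smul_psd' (by norm_num) (outer_psd _)
    · intro i
      fin_cases i <;> exact outer_psd _
    · rw [Fin.sum_univ_four]
      simp only [Matrix.cons_val_zero, Matrix.cons_val_one, Matrix.head_cons,
        Matrix.cons_val_two, Matrix.cons_val_three, Matrix.tail_cons, Matrix.smul_kronecker]
      unfold Amat
      abel
  · -- rho PSD
    exact smul_psd' (by norm_num) (outer_psd _)
  · exact rhoB_trace
  · -- not separable
    intro hsep
    have := sep_le _ hsep rhoB_trace
    rw [Amat_rho_trace] at this
    norm_num at this
  · norm_num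
  · -- ptr2
    ext i j
    fin_cases i <;> fin_cases j <;>
      norm_num [ptr2, rhoB, outer, Matrix.vecMulVec_apply, uB, Fin.sum_univ_two,
        Matrix.one_apply, Matrix.smul_apply]
  · -- ptr1
    ext i j
    fin_cases i <;> fin_cases j <;>
      norm_num [ptr1, rhoB, outer, Matrix.vecMulVec_apply, uB, Fin.sum_univ_two,
        Matrix.one_apply, Matrix.smul_apply]
  · rw [Amat_rho_trace]
  · intro σ hsep hpsd h2 h1
    have htrace : σ.trace = 1 := by
      have e : (ptr2 σ).trace = σ.trace := by
        simp [ptr2, Matrix.trace, Matrix.diag_apply, Fintype.sum_prod_type]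
      rw [← e, h2]
      norm_num [Matrix.trace_smul, Matrix.trace_one]
    have := sep_le σ hsep htrace
    intro hc
    linarith
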